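/- arXiv:1501.01507 — 5 statements merged into one kernel-verified Lean document; each statement's English description precedes it below -/
import Mathlib

section
/- Let P be a PEA and I a normal ideal in P. Then for a ∈ P: (i) a ∈ I iff a⁻⁻ ∈ I iff a˜˜ ∈ I; (ii) a⁻ ∈ I iff a˜ ∈ I. -/
open scoped Classical

/-- A generalized pseudo effect algebra: partial orthosummation modeled via `Option`. -/
structure GPEA (P : Type*) where
  oplus : P → P → Option P
  zero : P
  assoc₁ : ∀ {a b c ab s : P}, oplus a b = some ab → oplus ab c = some s →
    ∃ bc, oplus b c = some bc ∧ oplus a bc = some s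
  assoc₂ : ∀ {a b c bc s : P}, oplus b c = some bc → oplus a bc = some s →
    ∃ ab, oplus a b = some ab ∧ oplus ab c = some s
  conj : ∀ {a b s : P}, oplus a b = some s →
    (∃ c, oplus c a = some s) ∧ (∃ d, oplus b d = some s)
  cancel_right : ∀ {a b c s : P}, oplus a c = some s → oplus b c = some s → a = b
  cancel_left : ∀ {a b c s : P}, oplus c a = some s → oplus c b = some s → a = b
  oplus_zero : ∀ a : P, oplus a zero = some a
  zero_oplus : ∀ a : P, oplus zero a = some a
  pos : ∀ {a b : P}, oplus a b = some zero → a = zero ∧ b = zero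

namespace GPEA

variable {P Q : Type*}

/-- `a ≤ b` iff there is `c` with `a ⊕ c = b`. -/
def le (G : GPEA P) (a b : P) : Prop := ∃ c, G.oplus a c = some b

/-- `a ≤ b` (left version) iff there is `d` with `d ⊕ a = b`. -/
def leL (G : GPEA P) (a b : P) : Prop := ∃ d, G.oplus d a = some b

/-- An ideal: a nonempty, downward closed subset closed under existing orthosums. -/
def IsIdeal (G : GPEA P) (I : Set P) : Prop :=
  I.Nonempty ∧ (∀ a ∈ I, ∀ b : P, G.le b a → b ∈ I) ∧
    (∀ a ∈ I, ∀ b ∈ I, ∀ s : P, G.oplus a b = some s → s ∈ I)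

/-- A normal ideal: `a ⊕ c = c ⊕ b` implies `a ∈ I ↔ b ∈ I`. -/
def IsNormalIdeal (G : GPEA P) (I : Set P) : Prop :=
  G.IsIdeal I ∧ ∀ a b c s : P, G.oplus a c = some s → G.oplus c b = some s → (a ∈ I ↔ b ∈ I)

/-- Condition (R1) for an ideal. -/
def R1 (G : GPEA P) (I : Set P) : Prop :=
  ∀ i ∈ I, ∀ a b s : P, G.oplus a b = some s → G.le i s →
    ∃ j ∈ I, ∃ k ∈ I, G.le j a ∧ G.le k b ∧ ∃ t, G.oplus j k = some t ∧ G.le i t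

/-- Condition (R2) for an ideal. -/
def R2 (G : GPEA P) (I : Set P) : Prop :=
  ∀ i ∈ I, ∀ a : P, G.le i a →
    (∀ b x s : P, G.oplus x i = some a → G.oplus x b = some s →
      ∃ j ∈ I, G.le j b ∧ ∀ c, G.oplus j c = some b → ∃ t, G.oplus a c = some t) ∧
    (∀ b y s : P, G.oplus i y = some a → G.oplus b y = some s →
      ∃ k ∈ I, G.le k b ∧ ∀ z, G.oplus z k = some b → ∃ t, G.oplus z a = some t)

/-- A Riesz ideal is an ideal satisfying (R1) and (R2). -/
def IsRieszIdeal (G : GPEA P) (I : Set P) : Prop := G.IsIdeal I ∧ G.R1 I ∧ G.R2 I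

/-- A normal Riesz ideal. -/
def IsNormalRieszIdeal (G : GPEA P) (I : Set P) : Prop := G.IsNormalIdeal I ∧ G.R1 I ∧ G.R2 I

/-- A GPEA-morphism. -/
def IsMorphism (G : GPEA P) (H : GPEA Q) (φ : P → Q) : Prop :=
  ∀ a b s : P, G.oplus a b = some s → H.oplus (φ a) (φ b) = some (φ s)

/-- A unitizing GPEA-automorphism: a GPEA-automorphism `γ` such that
`γa ⊕ b` is defined iff `b ⊕ a` is defined. -/
def IsUnitizing (G : GPEA P) (γ : P → P) : Prop :=
  Function.Bijective γ ∧ G.IsMorphism G γ ∧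
    (∀ a b : P, (∃ s, G.oplus (γ a) (γ b) = some s) → ∃ t, G.oplus a b = some t) ∧
    (∀ a b : P, (∃ s, G.oplus (γ a) b = some s) ↔ ∃ t, G.oplus b a = some t)

/-- A weak congruence. -/
def IsWeakCong (G : GPEA P) (r : P → P → Prop) : Prop :=
  Equivalence r ∧ ∀ a b a₁ b₁ s s₁ : P, G.oplus a b = some s → G.oplus a₁ b₁ = some s₁ →
    r a a₁ → r b b₁ → r s s₁

/-- Condition (C3): a weak congruence satisfying it is a congruence. -/
def C3 (G : GPEA P) (r : P → P → Prop) : Prop :=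
  ∀ a b s : P, G.oplus a b = some s →
    (∀ a₁, r a a₁ → ∃ b₁, r b b₁ ∧ ∃ t, G.oplus a₁ b₁ = some t) ∧
    (∀ b₂, r b b₂ → ∃ a₂, r a a₂ ∧ ∃ t, G.oplus a₂ b₂ = some t)

/-- Condition (C4). -/
def C4 (G : GPEA P) (r : P → P → Prop) : Prop :=
  ∀ a b a₁ b₁ s t : P, r a b →
    ((G.oplus a a₁ = some s ∧ G.oplus b b₁ = some t ∧ r s t) ∨
      (G.oplus a₁ a = some s ∧ G.oplus b₁ b = some t ∧ r s t)) → r a₁ b₁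

/-- Condition (C5'). -/
def C5' (G : GPEA P) (r : P → P → Prop) : Prop :=
  ∀ a b c s : P, G.oplus b c = some s → r a s →
    ∃ a₁ a₂, r a₁ b ∧ r a₂ c ∧ G.oplus a₁ a₂ = some a

/-- Condition (CR): here `a \ c` is the unique `x` with `x ⊕ c = a`. -/
def CR (G : GPEA P) (r : P → P → Prop) : Prop :=
  ∀ a b : P, r a b → ∃ c d : P,
    G.le c a ∧ G.le a d ∧ G.le c b ∧ G.le b d ∧
    (∀ x, G.oplus x c = some a → r x G.zero) ∧
    (∀ x, G.oplus x c = some b → r x G.zero) ∧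
    (∀ x, G.oplus x a = some d → r x G.zero) ∧
    (∀ x, G.oplus x b = some d → r x G.zero)

/-- A Riesz congruence: a congruence satisfying (C4), (C5') and (CR). -/
def IsRieszCong (G : GPEA P) (r : P → P → Prop) : Prop :=
  G.IsWeakCong r ∧ G.C3 r ∧ G.C4 r ∧ G.C5' r ∧ G.CR r

/-- The relation `∼_I` induced by an ideal `I`: `a ∼_I b` iff there are
`i, j ∈ I` with `i ≤ a`, `j ≤ b` and `a \ i = b \ j`. -/
def simI (G : GPEA P) (I : Set P) (a b : P) : Prop :=
  ∃ i ∈ I, ∃ j ∈ I, ∃ d : P, G.oplus d i = some a ∧ G.oplus d j = some b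

/-- Condition (GCR) for the relation `∼_I`. -/
def GCR (G : GPEA P) (I : Set P) : Prop :=
  ∀ a b : P, G.simI I a b → ∃ i ∈ I, ∃ j ∈ I, ∃ s, G.oplus i a = some s ∧ G.oplus j b = some s

/-- The Riesz decomposition property. -/
def RDP (G : GPEA P) : Prop :=
  ∀ a b c d s : P, G.oplus a b = some s → G.oplus c d = some s →
    ∃ e₁₁ e₁₂ e₂₁ e₂₂ : P, G.oplus e₁₁ e₁₂ = some a ∧ G.oplus e₂₁ e₂₂ = some b ∧
      G.oplus e₁₁ e₂₁ = some c ∧ G.oplus e₁₂ e₂₂ = some d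

end GPEA

/-- A pseudo effect algebra: a GPEA with a largest element `1`. -/
structure PEA (P : Type*) extends GPEA P where
  one : P
  le_one : ∀ a : P, ∃ c, oplus a c = some one
  le_one' : ∀ a : P, ∃ d, oplus d a = some one

namespace PEA

variable {P : Type*}

/-- The right supplement `a˜`: the unique element with `a ⊕ a˜ = 1`. -/
noncomputable def rsup (U : PEA P) (a : P) : P := Classical.choose (U.le_one a)

/-- The left supplement `a⁻`: the unique element with `a⁻ ⊕ a = 1`. -/
noncomputable def lsup (U : PEA P) (a : P) : P := Classical.choose (U.le_one' a)

/-- A state on a PEA. -/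
def IsState (U : PEA P) (s : P → ℝ) : Prop :=
  (∀ a : P, 0 ≤ s a ∧ s a ≤ 1) ∧ s U.one = 1 ∧
    ∀ a b c : P, U.oplus a b = some c → s c = s a + s b

end PEA

/-- `U` is a binary unitization of the GPEA `G` via the embedding `ι`. -/
def IsBinaryUnitization {P Q : Type*} (G : GPEA P) (U : PEA Q) (ι : P → Q) : Prop :=
  Function.Injective ι ∧ ι G.zero = U.toGPEA.zero ∧
    (∀ a b : P, U.oplus (ι a) (ι b) = (G.oplus a b).map ι) ∧
    (∀ a : P, U.one ≠ ι a) ∧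
    (∀ x y : Q, x ∉ Set.range ι → y ∉ Set.range ι → U.oplus x y = none)

/-- The orthosummation of the `γ`-unitization on `P ⊕ P`
(`Sum.inl a` is `a ∈ P`, `Sum.inr b` is `ηb`). -/
noncomputable def uop {P : Type*} (G : GPEA P) (γ : P → P) :
    P ⊕ P → P ⊕ P → Option (P ⊕ P)
  | .inl a, .inl b => (G.oplus a b).map .inl
  | .inl a, .inr b => if h : G.leL a b then some (.inr (Classical.choose h)) else none
  | .inr a, .inl b => if h : G.le (γ b) a then some (.inr (Classical.choose h)) else none
  | .inr _, .inr _ => none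

/-- A PEA-isomorphism. -/
def IsPEAIso {A B : Type*} (U : PEA A) (V : PEA B) (φ : A → B) : Prop :=
  Function.Bijective φ ∧
    (∀ a b s : A, U.oplus a b = some s → V.oplus (φ a) (φ b) = some (φ s)) ∧
    (∀ a b : A, (∃ s, V.oplus (φ a) (φ b) = some s) → ∃ t, U.oplus a b = some t) ∧
    φ U.one = V.one

/-- The coordinatewise orthosummation on `I → P`. -/
noncomputable def piOplus {P : Type*} {I : Type*} (G : GPEA P) (f g : I → P) :
    Option (I → P) :=
  if h : ∀ i, ∃ s, G.oplus (f i) (g i) = some s then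
    some (fun i => Classical.choose (h i)) else none

/-- The extension `∼*` of a relation on `P` to `P ⊕ P`. -/
def rstar {P : Type*} (r : P → P → Prop) : P ⊕ P → P ⊕ P → Prop
  | .inl a, .inl b => r a b
  | .inr a, .inr b => r a b
  | _, _ => False

namespace PEA

variable {P : Type*} (U : PEA P)

theorem oplus_rsup (a : P) : U.oplus a (U.rsup a) = some U.one :=
  Classical.choose_spec (U.le_one a)

theorem lsup_oplus (a : P) : U.oplus (U.lsup a) a = some U.one :=
  Classical.choose_spec (U.le_one' a)

end PEA

theorem GPEA.IsNormalIdeal.mem_iff_of_oplus_eq {P : Type*} {G : GPEA P} {I : Set P}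
    (hI : G.IsNormalIdeal I) {a b c s : P} (hac : G.oplus a c = some s)
    (hcb : G.oplus c b = some s) : a ∈ I ↔ b ∈ I :=
  hI.2 a b c s hac hcb

theorem stmt6 {P : Type*} (U : PEA P) {I : Set P}
    (hI : U.toGPEA.IsNormalIdeal I) (a : P) :
    ((a ∈ I ↔ U.lsup (U.lsup a) ∈ I) ∧ (a ∈ I ↔ U.rsup (U.rsup a) ∈ I)) ∧
    (U.lsup a ∈ I ↔ U.rsup a ∈ I) :=
  ⟨⟨(hI.mem_iff_of_oplus_eq (U.lsup_oplus (U.lsup a)) (U.lsup_oplus a)).symm,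
      hI.mem_iff_of_oplus_eq (U.oplus_rsup a) (U.oplus_rsup (U.rsup a))⟩,
    hI.mem_iff_of_oplus_eq (U.lsup_oplus a) (U.oplus_rsup a)⟩
end

section
/- Let (P; ⊕, 0) be a GPEA with a unitizing GPEA-automorphism γ (i.e. γa ⊕ b exists iff b ⊕ a exists). Let Pᵉ be a disjoint copy of P via a bijection η: P → Pᵉ, set U := P ∪ Pᵉ with 1 := η0, and define + on U by: (1) a + b := a ⊕ b for a,b ∈ P when defined; (2) a + ηb := η(b \ a) when a ≤ b; (3) ηa + b := η(γb / a) when γb ≤ a; (4) ηa + ηb undefined. Then (U; +, 0, 1) is a pseudo effect algebra which is a binary unitization of P, and for all a ∈ P one has ηa = a˜ and γa = a⁻⁻ in U. -/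
open scoped Classical

/-! The copy `ηb` is designed to be the right supplement `b˜`, and `γ` the double left supplement
`b ↦ b⁻⁻`: rules (2) and (3) are the identities `a + (d ⊕ a)˜ = d˜` and
`(b⁻⁻ ⊕ c)˜ + b = c˜`, valid in every PEA. Each PEA axiom for `+` then splits according to which
arguments lie in the copy, and every case reduces to a GPEA axiom of `⊕`, often the mirrored one.
That `γ` is a morphism reflecting definedness lets it pass through sums in the associativity
cases, and the unitizing condition `γa ⊕ b ↔ b ⊕ a` supplies the conjugates needed for the
summands of `ηa`. -/

namespace GPEA

variable {P Q : Type*} {G : GPEA P} {H : GPEA Q} {φ : P → Q}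

theorem IsMorphism.map_zero (hφ : G.IsMorphism H φ) : φ G.zero = H.zero :=
  H.cancel_left (hφ _ _ _ (G.oplus_zero G.zero)) (H.oplus_zero (φ G.zero))

theorem IsMorphism.exists_oplus_of_map_oplus (hφ : G.IsMorphism H φ)
    (hrefl : ∀ a b : P, (∃ s, H.oplus (φ a) (φ b) = some s) → ∃ t, G.oplus a b = some t)
    {a b : P} {t : Q} (h : H.oplus (φ a) (φ b) = some t) :
    ∃ s, G.oplus a b = some s ∧ φ s = t := by
  obtain ⟨s, hs⟩ := hrefl a b ⟨t, h⟩
  exact ⟨s, hs, Option.some_inj.mp ((hφ _ _ _ hs).symm.trans h)⟩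

end GPEA

section Unitization

variable {P : Type*} (G : GPEA P) (γ : P → P)

theorem uop_inl_inl_eq_some (a b : P) (x : P ⊕ P) :
    uop G γ (.inl a) (.inl b) = some x ↔ ∃ s, x = .inl s ∧ G.oplus a b = some s := by
  cases h : G.oplus a b <;> simp [uop, h, eq_comm]

theorem uop_inl_inr_eq_some (a b : P) (x : P ⊕ P) :
    uop G γ (.inl a) (.inr b) = some x ↔ ∃ d, x = .inr d ∧ G.oplus d a = some b := by
  simp only [uop]
  split_ifs with h
  · refine ⟨fun hx => ⟨_, (Option.some_inj.mp hx).symm, Classical.choose_spec h⟩, ?_⟩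
    rintro ⟨d, rfl, hd⟩
    rw [G.cancel_right (Classical.choose_spec h) hd]
  · exact ⟨nofun, fun ⟨d, _, hd⟩ => absurd ⟨d, hd⟩ h⟩

theorem uop_inr_inl_eq_some (a b : P) (x : P ⊕ P) :
    uop G γ (.inr a) (.inl b) = some x ↔ ∃ c, x = .inr c ∧ G.oplus (γ b) c = some a := by
  simp only [uop]
  split_ifs with h
  · refine ⟨fun hx => ⟨_, (Option.some_inj.mp hx).symm, Classical.choose_spec h⟩, ?_⟩
    rintro ⟨c, rfl, hc⟩
    rw [G.cancel_left (Classical.choose_spec h) hc]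
  · exact ⟨nofun, fun ⟨c, _, hc⟩ => absurd ⟨c, hc⟩ h⟩

@[simp]
theorem uop_inr_inr (a b : P) : uop G γ (.inr a) (.inr b) = none := rfl

theorem uop_inl_inr_self (a : P) : uop G γ (.inl a) (.inr a) = some (.inr G.zero) :=
  (uop_inl_inr_eq_some ..).mpr ⟨G.zero, rfl, G.zero_oplus a⟩

theorem uop_inr_map_inl (a : P) : uop G γ (.inr (γ a)) (.inl a) = some (.inr G.zero) :=
  (uop_inr_inl_eq_some ..).mpr ⟨G.zero, rfl, G.oplus_zero _⟩

variable {G γ}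

theorem uop_assoc₁ (hmor : G.IsMorphism G γ)
    (hrefl : ∀ a b : P, (∃ s, G.oplus (γ a) (γ b) = some s) → ∃ t, G.oplus a b = some t)
    {a b c ab s : P ⊕ P} (hab : uop G γ a b = some ab) (hs : uop G γ ab c = some s) :
    ∃ bc, uop G γ b c = some bc ∧ uop G γ a bc = some s := by
  rcases a with a | a <;> rcases b with b | b <;> rcases c with c | c
  · obtain ⟨p, rfl, hp⟩ := (uop_inl_inl_eq_some ..).mp hab
    obtain ⟨q, rfl, hq⟩ := (uop_inl_inl_eq_some ..).mp hs
    obtain ⟨bc, h1, h2⟩ := G.assoc₁ hp hq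
    exact ⟨.inl bc, (uop_inl_inl_eq_some ..).mpr ⟨bc, rfl, h1⟩,
      (uop_inl_inl_eq_some ..).mpr ⟨_, rfl, h2⟩⟩
  · obtain ⟨p, rfl, hp⟩ := (uop_inl_inl_eq_some ..).mp hab
    obtain ⟨d, rfl, hd⟩ := (uop_inl_inr_eq_some ..).mp hs
    obtain ⟨q, h1, h2⟩ := G.assoc₂ hp hd
    exact ⟨.inr q, (uop_inl_inr_eq_some ..).mpr ⟨q, rfl, h2⟩,
      (uop_inl_inr_eq_some ..).mpr ⟨d, rfl, h1⟩⟩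
  · obtain ⟨d, rfl, hd⟩ := (uop_inl_inr_eq_some ..).mp hab
    obtain ⟨e, rfl, he⟩ := (uop_inr_inl_eq_some ..).mp hs
    obtain ⟨f, h1, h2⟩ := G.assoc₁ he hd
    exact ⟨.inr f, (uop_inr_inl_eq_some ..).mpr ⟨f, rfl, h2⟩,
      (uop_inl_inr_eq_some ..).mpr ⟨e, rfl, h1⟩⟩
  · obtain ⟨d, rfl, -⟩ := (uop_inl_inr_eq_some ..).mp hab
    simp at hs
  · obtain ⟨d, rfl, hd⟩ := (uop_inr_inl_eq_some ..).mp hab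
    obtain ⟨e, rfl, he⟩ := (uop_inr_inl_eq_some ..).mp hs
    obtain ⟨q, h1, h2⟩ := G.assoc₂ he hd
    obtain ⟨p, hp, rfl⟩ := hmor.exists_oplus_of_map_oplus hrefl h1
    exact ⟨.inl p, (uop_inl_inl_eq_some ..).mpr ⟨p, rfl, hp⟩,
      (uop_inr_inl_eq_some ..).mpr ⟨e, rfl, h2⟩⟩
  · obtain ⟨d, rfl, -⟩ := (uop_inr_inl_eq_some ..).mp hab
    simp at hs
  all_goals simp at hab

theorem uop_assoc₂ (hmor : G.IsMorphism G γ) {a b c bc s : P ⊕ P}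
    (hbc : uop G γ b c = some bc) (hs : uop G γ a bc = some s) :
    ∃ ab, uop G γ a b = some ab ∧ uop G γ ab c = some s := by
  rcases a with a | a <;> rcases b with b | b <;> rcases c with c | c
  · obtain ⟨p, rfl, hp⟩ := (uop_inl_inl_eq_some ..).mp hbc
    obtain ⟨q, rfl, hq⟩ := (uop_inl_inl_eq_some ..).mp hs
    obtain ⟨ab, h1, h2⟩ := G.assoc₂ hp hq
    exact ⟨.inl ab, (uop_inl_inl_eq_some ..).mpr ⟨ab, rfl, h1⟩,
      (uop_inl_inl_eq_some ..).mpr ⟨_, rfl, h2⟩⟩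
  · obtain ⟨d, rfl, hd⟩ := (uop_inl_inr_eq_some ..).mp hbc
    obtain ⟨e, rfl, he⟩ := (uop_inl_inr_eq_some ..).mp hs
    obtain ⟨p, h1, h2⟩ := G.assoc₁ he hd
    exact ⟨.inl p, (uop_inl_inl_eq_some ..).mpr ⟨p, rfl, h1⟩,
      (uop_inl_inr_eq_some ..).mpr ⟨e, rfl, h2⟩⟩
  · obtain ⟨d, rfl, hd⟩ := (uop_inr_inl_eq_some ..).mp hbc
    obtain ⟨e, rfl, he⟩ := (uop_inl_inr_eq_some ..).mp hs
    obtain ⟨f, h1, h2⟩ := G.assoc₂ he hd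
    exact ⟨.inr f, (uop_inl_inr_eq_some ..).mpr ⟨f, rfl, h2⟩,
      (uop_inr_inl_eq_some ..).mpr ⟨e, rfl, h1⟩⟩
  · simp at hbc
  · obtain ⟨p, rfl, hp⟩ := (uop_inl_inl_eq_some ..).mp hbc
    obtain ⟨e, rfl, he⟩ := (uop_inr_inl_eq_some ..).mp hs
    obtain ⟨f, h1, h2⟩ := G.assoc₁ (hmor _ _ _ hp) he
    exact ⟨.inr f, (uop_inr_inl_eq_some ..).mpr ⟨f, rfl, h2⟩,
      (uop_inr_inl_eq_some ..).mpr ⟨e, rfl, h1⟩⟩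
  · obtain ⟨d, rfl, -⟩ := (uop_inl_inr_eq_some ..).mp hbc
    simp at hs
  · obtain ⟨d, rfl, -⟩ := (uop_inr_inl_eq_some ..).mp hbc
    simp at hs
  · simp at hbc

theorem uop_conj (hsurj : Function.Surjective γ)
    (hunit : ∀ a b : P, (∃ s, G.oplus (γ a) b = some s) ↔ ∃ t, G.oplus b a = some t)
    {a b s : P ⊕ P} (h : uop G γ a b = some s) :
    (∃ c, uop G γ c a = some s) ∧ ∃ d, uop G γ b d = some s := by
  rcases a with a | a <;> rcases b with b | b
  · obtain ⟨p, rfl, hp⟩ := (uop_inl_inl_eq_some ..).mp h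
    obtain ⟨⟨c, hc⟩, ⟨d, hd⟩⟩ := G.conj hp
    exact ⟨⟨.inl c, (uop_inl_inl_eq_some ..).mpr ⟨p, rfl, hc⟩⟩,
      ⟨.inl d, (uop_inl_inl_eq_some ..).mpr ⟨p, rfl, hd⟩⟩⟩
  · obtain ⟨d, rfl, hd⟩ := (uop_inl_inr_eq_some ..).mp h
    obtain ⟨c, hc⟩ := (hunit a d).mpr ⟨b, hd⟩
    obtain ⟨e, he⟩ := (G.conj hd).1
    obtain ⟨x, rfl⟩ := hsurj e
    exact ⟨⟨.inr c, (uop_inr_inl_eq_some ..).mpr ⟨d, rfl, hc⟩⟩,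
      ⟨.inl x, (uop_inr_inl_eq_some ..).mpr ⟨d, rfl, he⟩⟩⟩
  · obtain ⟨c, rfl, hc⟩ := (uop_inr_inl_eq_some ..).mp h
    obtain ⟨f, hf⟩ := (G.conj hc).2
    obtain ⟨z, hz⟩ := (hunit b c).mp ⟨a, hc⟩
    exact ⟨⟨.inl f, (uop_inl_inr_eq_some ..).mpr ⟨c, rfl, hf⟩⟩,
      ⟨.inr z, (uop_inl_inr_eq_some ..).mpr ⟨c, rfl, hz⟩⟩⟩
  · simp at h

theorem uop_cancel_right {a b c s : P ⊕ P} (ha : uop G γ a c = some s)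
    (hb : uop G γ b c = some s) : a = b := by
  rcases a with a | a <;> rcases b with b | b <;> rcases c with c | c
  · obtain ⟨p, rfl, hp⟩ := (uop_inl_inl_eq_some ..).mp ha
    obtain ⟨q, hq, hq'⟩ := (uop_inl_inl_eq_some ..).mp hb
    cases hq
    rw [G.cancel_right hp hq']
  · obtain ⟨p, rfl, hp⟩ := (uop_inl_inr_eq_some ..).mp ha
    obtain ⟨q, hq, hq'⟩ := (uop_inl_inr_eq_some ..).mp hb
    cases hq
    rw [G.cancel_left hp hq']
  · obtain ⟨p, rfl, -⟩ := (uop_inl_inl_eq_some ..).mp ha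
    obtain ⟨q, hq, -⟩ := (uop_inr_inl_eq_some ..).mp hb
    cases hq
  · obtain ⟨p, rfl, -⟩ := (uop_inl_inr_eq_some ..).mp ha
    simp at hb
  · obtain ⟨p, rfl, -⟩ := (uop_inr_inl_eq_some ..).mp ha
    obtain ⟨q, hq, -⟩ := (uop_inl_inl_eq_some ..).mp hb
    cases hq
  · simp at ha
  · obtain ⟨p, rfl, hp⟩ := (uop_inr_inl_eq_some ..).mp ha
    obtain ⟨q, hq, hq'⟩ := (uop_inr_inl_eq_some ..).mp hb
    cases hq
    rw [Option.some_inj.mp (hp.symm.trans hq')]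
  · simp at ha

theorem uop_cancel_left (hinj : Function.Injective γ) {a b c s : P ⊕ P}
    (ha : uop G γ c a = some s) (hb : uop G γ c b = some s) : a = b := by
  rcases a with a | a <;> rcases b with b | b <;> rcases c with c | c
  · obtain ⟨p, rfl, hp⟩ := (uop_inl_inl_eq_some ..).mp ha
    obtain ⟨q, hq, hq'⟩ := (uop_inl_inl_eq_some ..).mp hb
    cases hq
    rw [G.cancel_left hp hq']
  · obtain ⟨p, rfl, hp⟩ := (uop_inr_inl_eq_some ..).mp ha
    obtain ⟨q, hq, hq'⟩ := (uop_inr_inl_eq_some ..).mp hb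
    cases hq
    rw [hinj (G.cancel_right hp hq')]
  · obtain ⟨p, rfl, -⟩ := (uop_inl_inl_eq_some ..).mp ha
    obtain ⟨q, hq, -⟩ := (uop_inl_inr_eq_some ..).mp hb
    cases hq
  · obtain ⟨p, rfl, -⟩ := (uop_inr_inl_eq_some ..).mp ha
    simp at hb
  · obtain ⟨p, rfl, -⟩ := (uop_inl_inr_eq_some ..).mp ha
    obtain ⟨q, hq, -⟩ := (uop_inl_inl_eq_some ..).mp hb
    cases hq
  · simp at ha
  · obtain ⟨p, rfl, hp⟩ := (uop_inl_inr_eq_some ..).mp ha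
    obtain ⟨q, hq, hq'⟩ := (uop_inl_inr_eq_some ..).mp hb
    cases hq
    rw [Option.some_inj.mp (hp.symm.trans hq')]
  · simp at ha

theorem uop_zero (hmor : G.IsMorphism G γ) (a : P ⊕ P) : uop G γ a (.inl G.zero) = some a := by
  rcases a with a | a
  · exact (uop_inl_inl_eq_some ..).mpr ⟨a, rfl, G.oplus_zero a⟩
  · exact (uop_inr_inl_eq_some ..).mpr ⟨a, rfl, by rw [hmor.map_zero]; exact G.zero_oplus a⟩

theorem zero_uop (a : P ⊕ P) : uop G γ (.inl G.zero) a = some a := by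
  rcases a with a | a
  · exact (uop_inl_inl_eq_some ..).mpr ⟨a, rfl, G.zero_oplus a⟩
  · exact (uop_inl_inr_eq_some ..).mpr ⟨a, rfl, G.oplus_zero a⟩

theorem eq_zero_of_uop_eq_zero {a b : P ⊕ P} (h : uop G γ a b = some (.inl G.zero)) :
    a = .inl G.zero ∧ b = .inl G.zero := by
  rcases a with a | a <;> rcases b with b | b
  · obtain ⟨p, hp, hp'⟩ := (uop_inl_inl_eq_some ..).mp h
    cases hp
    obtain ⟨rfl, rfl⟩ := G.pos hp'
    exact ⟨rfl, rfl⟩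
  · obtain ⟨p, hp, -⟩ := (uop_inl_inr_eq_some ..).mp h
    cases hp
  · obtain ⟨p, hp, -⟩ := (uop_inr_inl_eq_some ..).mp h
    cases hp
  · simp at h

variable (G γ)

theorem exists_uop_eq_inr_zero (hsurj : Function.Surjective γ) (a : P ⊕ P) :
    ∃ c, uop G γ a c = some (.inr G.zero) := by
  rcases a with a | a
  · exact ⟨.inr a, uop_inl_inr_self G γ a⟩
  · obtain ⟨b, rfl⟩ := hsurj a
    exact ⟨.inl b, uop_inr_map_inl G γ b⟩

theorem exists_uop_eq_inr_zero' (a : P ⊕ P) : ∃ d, uop G γ d a = some (.inr G.zero) := by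
  rcases a with a | a
  · exact ⟨.inr (γ a), uop_inr_map_inl G γ a⟩
  · exact ⟨.inl a, uop_inl_inr_self G γ a⟩

end Unitization

noncomputable def GPEA.unitization {P : Type*} (G : GPEA P) (γ : P → P)
    (hγ : G.IsUnitizing γ) : PEA (P ⊕ P) where
  oplus := uop G γ
  zero := .inl G.zero
  assoc₁ := uop_assoc₁ hγ.2.1 hγ.2.2.1
  assoc₂ := uop_assoc₂ hγ.2.1
  conj := uop_conj hγ.1.2 hγ.2.2.2
  cancel_right := uop_cancel_right
  cancel_left := uop_cancel_left hγ.1.1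
  oplus_zero := uop_zero hγ.2.1
  zero_oplus := zero_uop
  pos := eq_zero_of_uop_eq_zero
  one := .inr G.zero
  le_one := exists_uop_eq_inr_zero G γ hγ.1.2
  le_one' := exists_uop_eq_inr_zero' G γ

theorem GPEA.unitization_isBinaryUnitization {P : Type*} (G : GPEA P) (γ : P → P)
    (hγ : G.IsUnitizing γ) : IsBinaryUnitization G (G.unitization γ hγ) Sum.inl := by
  refine ⟨Sum.inl_injective, rfl, fun _ _ => rfl, fun _ => nofun, ?_⟩
  rintro (x | x) (y | y) hx hy <;> first | rfl | simp at hx hy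

theorem stmt8 {P : Type*} (G : GPEA P) (γ : P → P) (hγ : G.IsUnitizing γ) :
    ∃ U : PEA (P ⊕ P),
      U.toGPEA.oplus = uop G γ ∧ U.toGPEA.zero = Sum.inl G.zero ∧
      U.one = Sum.inr G.zero ∧
      IsBinaryUnitization G U Sum.inl ∧
      (∀ a : P, U.oplus (Sum.inl a) (Sum.inr a) = some U.one) ∧
      (∀ a : P, ∃ l : P ⊕ P, U.oplus l (Sum.inl a) = some U.one ∧
        U.oplus (Sum.inl (γ a)) l = some U.one) :=
  ⟨G.unitization γ hγ, rfl, rfl, rfl, G.unitization_isBinaryUnitization γ hγ,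
    uop_inl_inr_self G γ,
    fun a => ⟨.inr (γ a), uop_inr_map_inl G γ a, uop_inl_inr_self G γ (γ a)⟩⟩
end

section
/- Let P be a GPEA, I a nonempty index set, λ, ρ: I → I bijections, and define γ: Pᴵ → Pᴵ (coordinatewise GPEA) by γ((aᵢ)ᵢ) = (a_{ρλ⁻¹(i)})ᵢ. Then condition (KCI) [for all families (aᵢ), (bᵢ) in Pᴵ and all i: a_{ρi} ⊕ bᵢ exists in P iff bᵢ ⊕ a_{λi} exists in P] holds iff γ is a unitizing GPEA-automorphism of Pᴵ. -/
open scoped Classical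

/-!
For a coordinatewise GPEA, both the morphism properties of a reindexing `f ↦ f ∘ σ` and the
unitizing condition are checked one coordinate at a time. Testing the unitizing condition on
families that are `0` outside a single coordinate `i` isolates the condition at `i`, since `0`
is orthogonal to everything; so the unitizing condition for `γ = (· ∘ (ρ ∘ λ⁻¹))` is exactly
(KCI) after substituting `i ↦ λ i`.
-/

open Function

namespace GPEA

variable {P I : Type*} (G : GPEA P)

theorem exists_piOplus_eq_some_iff (f g : I → P) :
    (∃ s, piOplus G f g = some s) ↔ ∀ i, ∃ s, G.oplus (f i) (g i) = some s := by
  unfold piOplus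
  split_ifs with h <;> simp [h]

theorem piOplus_comp_eq_some {f g s : I → P} (h : piOplus G f g = some s) (σ : I → I) :
    piOplus G (f ∘ σ) (g ∘ σ) = some (s ∘ σ) := by
  unfold piOplus at h ⊢
  split_ifs at h with hfg
  cases h
  exact dif_pos fun i => hfg (σ i)

theorem forall_exists_oplus_update_zero_iff (c : I → P) (x : P) (i : I) :
    (∀ j, ∃ s, G.oplus (c j) (update (fun _ => G.zero) i x j) = some s) ↔
      ∃ s, G.oplus (c i) x = some s := by
  refine ⟨fun h => by simpa using h i, fun h j => ?_⟩
  rcases eq_or_ne j i with rfl | hj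
  · simpa using h
  · exact ⟨_, by simpa [hj] using G.oplus_zero (c j)⟩

theorem forall_exists_update_zero_oplus_iff (c : I → P) (x : P) (i : I) :
    (∀ j, ∃ s, G.oplus (update (fun _ => G.zero) i x j) (c j) = some s) ↔
      ∃ s, G.oplus x (c i) = some s := by
  refine ⟨fun h => by simpa using h i, fun h j => ?_⟩
  rcases eq_or_ne j i with rfl | hj
  · simpa using h
  · exact ⟨_, by simpa [hj] using G.zero_oplus (c j)⟩

theorem isUnitizing_comp_right_iff {GI : GPEA (I → P)} (hop : GI.oplus = piOplus G)
    (σ : I ≃ I) :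
    GI.IsUnitizing (· ∘ σ) ↔ ∀ (a : I → P) (x : P) (i : I),
      (∃ s, G.oplus (a (σ i)) x = some s) ↔ ∃ s, G.oplus x (a i) = some s := by
  have bijective : Bijective fun f : I → P => f ∘ σ :=
    ⟨σ.surjective.injective_comp_right, fun f => ⟨f ∘ σ.symm, by ext; simp⟩⟩
  have morphism : GI.IsMorphism GI (· ∘ σ) := fun f g s h => by
    rw [hop] at h ⊢
    exact G.piOplus_comp_eq_some h σ
  have reflects : ∀ f g : I → P, (∃ s, GI.oplus (f ∘ σ) (g ∘ σ) = some s) →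
      ∃ t, GI.oplus f g = some t := by
    simp only [hop, exists_piOplus_eq_some_iff, comp_apply]
    exact fun f g h i => by simpa using h (σ.symm i)
  rw [show GI.IsUnitizing (· ∘ σ) ↔
      ∀ a b : I → P, (∃ s, GI.oplus (a ∘ σ) b = some s) ↔ ∃ t, GI.oplus b a = some t from
    ⟨fun h => h.2.2.2, fun h => ⟨bijective, morphism, reflects, h⟩⟩]
  simp only [hop, exists_piOplus_eq_some_iff, comp_apply]
  refine ⟨fun h a x i => ?_, fun h a b => forall_congr' fun i => h a (b i) i⟩
  exact (G.forall_exists_oplus_update_zero_iff (a ∘ σ) x i).symm.trans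
    ((h a _).trans (G.forall_exists_update_zero_oplus_iff a x i))

end GPEA

theorem stmt10_general {P : Type*} (G : GPEA P) {I : Type*} (l ρ : I ≃ I)
    (GI : GPEA (I → P)) (hop : GI.oplus = piOplus G) :
    (∀ (a b : I → P) (i : I),
        (∃ s, G.oplus (a (ρ i)) (b i) = some s) ↔
          ∃ s, G.oplus (b i) (a (l i)) = some s) ↔
      GI.IsUnitizing (fun f i => f (ρ (l.symm i))) := by
  rw [show (fun f i => f (ρ (l.symm i))) = (· ∘ (l.symm.trans ρ)) from rfl,
    G.isUnitizing_comp_right_iff hop]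
  refine ⟨fun h a x j => ?_, fun h a b i => ?_⟩
  · simpa using h a (fun _ => x) (l.symm j)
  · simpa using h a (b i) (l i)

theorem stmt10 {P : Type*} (G : GPEA P) {I : Type*} [Nonempty I] (l ρ : I ≃ I)
    (GI : GPEA (I → P)) (hop : GI.oplus = piOplus G)
    (hz : GI.zero = fun _ => G.zero) :
    (∀ (a b : I → P) (i : I),
        (∃ s, G.oplus (a (ρ i)) (b i) = some s) ↔
          ∃ s, G.oplus (b i) (a (l i)) = some s) ↔
      GI.IsUnitizing (fun f i => f (ρ (l.symm i))) :=
  stmt10_general G l ρ GI hop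
end

section
/- A congruence ∼ on a GPEA P satisfying (C4) and (C5') is a Riesz congruence iff every equivalence class of ∼ is both upward and downward directed. -/
open scoped Classical

/-! Differences of an interval `c ≤ a ≤ d` are `∼ 0` exactly when its ends are `∼`-equivalent:
compatibility of `∼` with `⊕` gives `d\a ∼ 0 → d ∼ a`, and the cancellation law (C4) gives the
converse. So the bounds required by (CR) are precisely common bounds inside the class of `a`. -/

namespace GPEA

variable {P : Type*} {G : GPEA P} {r : P → P → Prop}

theorem exists_oplus_eq_of_le {a b : P} (h : G.le a b) : ∃ x, G.oplus x a = some b :=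
  let ⟨_, hc⟩ := h
  (G.conj hc).1

theorem IsWeakCong.rel_of_oplus_of_rel_zero (hw : G.IsWeakCong r) {x a s : P}
    (hs : G.oplus x a = some s) (hx : r x G.zero) : r s a :=
  hw.2 x a G.zero a s a hs (G.zero_oplus a) hx (hw.1.refl a)

theorem IsWeakCong.rel_of_le (hw : G.IsWeakCong r) {a s : P} (hle : G.le a s)
    (hdiff : ∀ x, G.oplus x a = some s → r x G.zero) : r s a :=
  let ⟨x, hx⟩ := exists_oplus_eq_of_le hle
  hw.rel_of_oplus_of_rel_zero hx (hdiff x hx)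

theorem C4.rel_zero_of_oplus (h4 : G.C4 r) {x c a : P} (hc : r c c)
    (hs : G.oplus x c = some a) (ha : r a c) : r x G.zero :=
  h4 c c x G.zero a c hc (Or.inr ⟨hs, G.zero_oplus c, ha⟩)

end GPEA

theorem stmt12_general {P : Type*} (G : GPEA P) (r : P → P → Prop)
    (hw : G.IsWeakCong r) (h4 : G.C4 r) :
    G.CR r ↔ ∀ a b : P, r a b →
      (∃ d, r a d ∧ G.le a d ∧ G.le b d) ∧ (∃ c, r a c ∧ G.le c a ∧ G.le c b) := by
  have hr : Equivalence r := hw.1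
  constructor
  · intro hCR a b hab
    obtain ⟨c, d, hca, had, hcb, hbd, hc, -, hd, -⟩ := hCR a b hab
    exact ⟨⟨d, hr.symm (hw.rel_of_le had hd), had, hbd⟩, ⟨c, hw.rel_of_le hca hc, hca, hcb⟩⟩
  · intro hdir a b hab
    obtain ⟨⟨d, had, had_le, hbd_le⟩, ⟨c, hac, hca_le, hcb_le⟩⟩ := hdir a b hab
    have hbc : r b c := hr.trans (hr.symm hab) hac
    have hda : r d a := hr.symm had
    have hdb : r d b := hr.trans hda hab
    exact ⟨c, d, hca_le, had_le, hcb_le, hbd_le,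
      fun _ hx => h4.rel_zero_of_oplus (hr.refl c) hx hac,
      fun _ hx => h4.rel_zero_of_oplus (hr.refl c) hx hbc,
      fun _ hx => h4.rel_zero_of_oplus (hr.refl a) hx hda,
      fun _ hx => h4.rel_zero_of_oplus (hr.refl b) hx hdb⟩

theorem stmt12 {P : Type*} (G : GPEA P) (r : P → P → Prop)
    (hw : G.IsWeakCong r) (h3 : G.C3 r) (h4 : G.C4 r) (h5 : G.C5' r) :
    G.CR r ↔ ∀ a b : P, r a b →
      (∃ d, r a d ∧ G.le a d ∧ G.le b d) ∧ (∃ c, r a c ∧ G.le c a ∧ G.le c b) :=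
  stmt12_general G r hw h4
end

section
/- If ∼ is a Riesz congruence on a GPEA P, then I := {i ∈ P : i ∼ 0} is a normal Riesz ideal in P, and ∼ equals the relation ∼_I (where a ∼_I b iff there exist i, j ∈ I with i ≤ a, j ≤ b, and a\i = b\j). -/
open scoped Classical

/-!
Adding an element of `I = {i | i ∼ 0}` on either side of `d` stays in the class of `d`, and (C4)
cancels a common summand; this makes `I` a normal ideal. By (CR), related elements `a ∼ b` have a
common lower bound `c` with `a \ c, b \ c ∈ I`, which gives `∼ ⊆ ∼_I`; combined with (C5'),
which splits an element along a sum, resp. (C3), which extends a sum along `∼`, it yields (R1)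
and (R2).
-/

namespace GPEA

variable {P : Type*} {G : GPEA P} {r : P → P → Prop}

theorem IsWeakCong.rel_of_oplus_kernel (hr : G.IsWeakCong r) {d i a : P} (hi : r i G.zero)
    (h : G.oplus d i = some a) : r a d :=
  hr.2 d i d G.zero a d h (G.oplus_zero d) (hr.1.refl d) hi

theorem IsWeakCong.rel_of_kernel_oplus (hr : G.IsWeakCong r) {i d a : P} (hi : r i G.zero)
    (h : G.oplus i d = some a) : r a d :=
  hr.2 i d G.zero d a d h (G.zero_oplus d) hi (hr.1.refl d)

theorem IsWeakCong.kernel_oplus_mem (hr : G.IsWeakCong r) {a b s : P} (ha : r a G.zero)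
    (hb : r b G.zero) (h : G.oplus a b = some s) : r s G.zero :=
  hr.2 a b G.zero G.zero s G.zero h (G.zero_oplus G.zero) ha hb

theorem kernel_mem_of_le (hr : Equivalence r) (hC5 : G.C5' r) {a b : P} (ha : r a G.zero)
    (hba : G.le b a) : r b G.zero := by
  obtain ⟨z, hz⟩ := hba
  obtain ⟨u, v, hub, -, huv⟩ := hC5 G.zero b z a hz (hr.symm ha)
  obtain ⟨rfl, -⟩ := G.pos huv
  exact hr.symm hub

theorem kernel_mem_iff_of_oplus_eq (hr : G.IsWeakCong r) (hC4 : G.C4 r) {x c y s : P}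
    (hxc : G.oplus x c = some s) (hcy : G.oplus c y = some s) : r x G.zero ↔ r y G.zero := by
  constructor
  · intro hx
    exact hC4 c c y G.zero s c (hr.1.refl c)
      (Or.inl ⟨hcy, G.oplus_zero c, hr.rel_of_kernel_oplus hx hxc⟩)
  · intro hy
    exact hC4 c c x G.zero s c (hr.1.refl c)
      (Or.inr ⟨hxc, G.zero_oplus c, hr.rel_of_oplus_kernel hy hcy⟩)

theorem exists_oplus_kernel_of_kernel_oplus (hr : G.IsWeakCong r) (hC4 : G.C4 r) {x c a : P}
    (hx : r x G.zero) (h : G.oplus x c = some a) : ∃ x', r x' G.zero ∧ G.oplus c x' = some a := by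
  obtain ⟨x', hx'⟩ := (G.conj h).2
  exact ⟨x', (kernel_mem_iff_of_oplus_eq hr hC4 h hx').1 hx, hx'⟩

theorem exists_kernel_oplus_of_rel (hCR : G.CR r) {a b : P} (hab : r a b) :
    ∃ c x y, r x G.zero ∧ r y G.zero ∧ G.oplus x c = some a ∧ G.oplus y c = some b := by
  obtain ⟨c, -, ⟨u, hu⟩, -, ⟨v, hv⟩, -, hxa, hyb, -, -⟩ := hCR a b hab
  obtain ⟨x, hx⟩ := (G.conj hu).1
  obtain ⟨y, hy⟩ := (G.conj hv).1
  exact ⟨c, x, y, hxa x hx, hyb y hy, hx, hy⟩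

theorem exists_oplus_kernel_of_rel (hr : G.IsWeakCong r) (hC4 : G.C4 r) (hCR : G.CR r)
    {a b : P} (hab : r a b) :
    ∃ c x y, r x G.zero ∧ r y G.zero ∧ G.oplus c x = some a ∧ G.oplus c y = some b := by
  obtain ⟨c, x, y, hx, hy, hxc, hyc⟩ := exists_kernel_oplus_of_rel hCR hab
  obtain ⟨x', hx', hcx'⟩ := exists_oplus_kernel_of_kernel_oplus hr hC4 hx hxc
  obtain ⟨y', hy', hcy'⟩ := exists_oplus_kernel_of_kernel_oplus hr hC4 hy hyc
  exact ⟨c, x', y', hx', hy', hcx', hcy'⟩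

theorem isNormalIdeal_kernel (hr : G.IsWeakCong r) (hC4 : G.C4 r) (hC5 : G.C5' r) :
    G.IsNormalIdeal {i | r i G.zero} :=
  ⟨⟨⟨G.zero, hr.1.refl _⟩, fun _ ha _ hba => kernel_mem_of_le hr.1 hC5 ha hba,
    fun _ ha _ hb _ h => hr.kernel_oplus_mem ha hb h⟩,
    fun _ _ _ _ h₁ h₂ => kernel_mem_iff_of_oplus_eq hr hC4 h₁ h₂⟩

theorem exists_kernel_le_of_kernel_oplus_eq (hr : G.IsWeakCong r) (hCR : G.CR r)
    {i J w b v : P} (hi : r i G.zero) (hJ : r J G.zero) (hiw : G.oplus i w = some v)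
    (hJb : G.oplus J b = some v) :
    ∃ k, r k G.zero ∧ G.le k b ∧ ∃ t, G.oplus J k = some t ∧ G.le i t := by
  have hwb : r w b :=
    hr.1.trans (hr.1.symm (hr.rel_of_kernel_oplus hi hiw)) (hr.rel_of_kernel_oplus hJ hJb)
  obtain ⟨c, y, k, -, hk, hyc, hkc⟩ := exists_kernel_oplus_of_rel hCR hwb
  obtain ⟨t, hiy, htc⟩ := G.assoc₂ hyc hiw
  obtain ⟨t', hJk, ht'c⟩ := G.assoc₂ hkc hJb
  obtain rfl : t = t' := G.cancel_right htc ht'c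
  exact ⟨k, hk, ⟨c, hkc⟩, t, hJk, y, hiy⟩

theorem r1_kernel (hr : G.IsWeakCong r) (hC4 : G.C4 r) (hC5 : G.C5' r) (hCR : G.CR r) :
    G.R1 {i | r i G.zero} := by
  intro i hi a b s hab ⟨_, hic⟩
  obtain ⟨c₀, hc₀⟩ := (G.conj hic).1
  obtain ⟨c₁, c₂, hc₁a, -, hc₁₂⟩ :=
    hC5 c₀ a b s hab (hr.1.symm (hr.rel_of_oplus_kernel hi hc₀))
  obtain ⟨f, x, J, -, hJ, hfx, hfJ⟩ := exists_oplus_kernel_of_rel hr hC4 hCR hc₁a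
  -- `f ⊕ (x ⊕ c₂ ⊕ i) = s = f ⊕ (J ⊕ b)`, so cancelling `f` gives `x ⊕ c₂ ⊕ i = J ⊕ b`.
  obtain ⟨u, -, hfu⟩ := G.assoc₁ hfx hc₁₂
  obtain ⟨v, hui, hfv⟩ := G.assoc₁ hfu hc₀
  obtain ⟨v', hJb, hfv'⟩ := G.assoc₁ hfJ hab
  obtain rfl : v = v' := G.cancel_left hfv hfv'
  obtain ⟨w, hiw⟩ := (G.conj hui).2
  obtain ⟨k, hk, hkb, hJki⟩ := exists_kernel_le_of_kernel_oplus_eq hr hCR hi hJ hiw hJb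
  exact ⟨J, hJ, k, hk, (G.conj hfJ).2, hkb, hJki⟩

theorem r2_kernel (hr : G.IsWeakCong r) (hC3 : G.C3 r) (hC4 : G.C4 r) (hCR : G.CR r) :
    G.R2 {i | r i G.zero} := by
  intro i hi a _
  constructor
  · intro b x s hxi hxb
    obtain ⟨b₁, hbb₁, t, hab₁⟩ := (hC3 x b s hxb).1 a (hr.1.symm (hr.rel_of_oplus_kernel hi hxi))
    obtain ⟨f, j, y, hj, -, hjf, hyf⟩ := exists_kernel_oplus_of_rel hCR hbb₁
    refine ⟨j, hj, ⟨f, hjf⟩, fun c hjc => ?_⟩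
    obtain rfl : c = f := G.cancel_left hjc hjf
    obtain ⟨w, hfw⟩ := (G.conj hyf).2
    obtain ⟨af, haf, -⟩ := G.assoc₂ hfw hab₁
    exact ⟨af, haf⟩
  · intro b y s hiy hby
    obtain ⟨a₂, hba₂, t, ha₂a⟩ := (hC3 b y s hby).2 a (hr.1.symm (hr.rel_of_kernel_oplus hi hiy))
    obtain ⟨g, k, x, hk, -, hkg, hxg⟩ := exists_kernel_oplus_of_rel hCR hba₂
    obtain ⟨u, hu, hgu⟩ := exists_oplus_kernel_of_kernel_oplus hr hC4 hk hkg
    refine ⟨u, hu, (G.conj hgu).2, fun z hzu => ?_⟩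
    obtain rfl : z = g := G.cancel_right hzu hgu
    obtain ⟨ga, hga, -⟩ := G.assoc₁ hxg ha₂a
    exact ⟨ga, hga⟩

theorem rel_iff_simI_kernel (hr : G.IsWeakCong r) (hC4 : G.C4 r) (hCR : G.CR r) (a b : P) :
    r a b ↔ G.simI {i | r i G.zero} a b := by
  constructor
  · intro hab
    obtain ⟨c, x, y, hx, hy, hcx, hcy⟩ := exists_oplus_kernel_of_rel hr hC4 hCR hab
    exact ⟨x, hx, y, hy, c, hcx, hcy⟩
  · rintro ⟨i, hi, j, hj, d, hdi, hdj⟩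
    exact hr.1.trans (hr.rel_of_oplus_kernel hi hdi) (hr.1.symm (hr.rel_of_oplus_kernel hj hdj))

end GPEA

theorem stmt13 {P : Type*} (G : GPEA P) (r : P → P → Prop) (h : G.IsRieszCong r) :
    G.IsNormalRieszIdeal {i : P | r i G.zero} ∧
    ∀ a b : P, r a b ↔ G.simI {i : P | r i G.zero} a b := by
  obtain ⟨hr, hC3, hC4, hC5, hCR⟩ := h
  exact ⟨⟨GPEA.isNormalIdeal_kernel hr hC4 hC5, GPEA.r1_kernel hr hC4 hC5 hCR,
    GPEA.r2_kernel hr hC3 hC4 hCR⟩, GPEA.rel_iff_simI_kernel hr hC4 hCR⟩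
end
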